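/- arXiv:2307.09100 — 2 statements merged into one kernel-verified Lean document; each statement's English description precedes it below -/
import Mathlib

section
/- Let B and C be essentially countable directed preorders, viewed also as thin categories (with a unique morphism x → y iff x ≤ y). Then B is Tukey reducible to C as preorders (there is a Tukey map B → C) if and only if there exists a pre-adjunction from the thin category B to the thin category C. -/
open CategoryTheory

/-- A pre-adjunction from `B` to `C` (Mašulović). -/
structure PreAdjunction (B : Type*) (C : Type*) [Category B] [Category C] where
  F : B → C
  H : C → B
  Φ : ∀ (X : B) (Y : C), (F X ⟶ Y) → (X ⟶ H Y)
  pa : ∀ (A X : B) (Y : C) (u : F X ⟶ Y) (f : A ⟶ X),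
    ∃ v : F A ⟶ F X, f ≫ Φ X Y u = Φ A Y (v ≫ u)

/-- A subset of a preorder is bounded (from above). -/
def SBounded {α : Type*} [Preorder α] (S : Set α) : Prop := ∃ b, ∀ x ∈ S, x ≤ b

/-- A Tukey (unbounded) map: images of unbounded sets are unbounded. -/
def IsTukeyMap {α β : Type*} [Preorder α] [Preorder β] (f : α → β) : Prop :=
  ∀ S : Set α, ¬ SBounded S → ¬ SBounded (f '' S)

section Aux

variable {α β : Type} [Preorder α] [Preorder β]

/-- Every element is below some representative from the enumeration. -/
private lemma exists_monotone_tukey (hA : IsDirected α (· ≤ ·)) (hB : IsDirected β (· ≤ ·))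
    (hcA : Countable (Antisymmetrization α (· ≤ ·))) [Nonempty α]
    (f : α → β) (hf : IsTukeyMap f) : ∃ F : α → β, Monotone F ∧ IsTukeyMap F := by
  by_cases hbd : SBounded (Set.univ : Set α)
  · -- α is bounded: a constant map works.
    refine ⟨fun _ => f (Classical.arbitrary α), monotone_const, ?_⟩
    intro S hS _
    obtain ⟨b, hb⟩ := hbd
    exact hS ⟨b, fun x _ => hb x trivial⟩
  · -- α is unbounded: build a cofinal increasing chain.
    have : Nonempty (Antisymmetrization α (· ≤ ·)) :=
      ⟨toAntisymmetrization _ (Classical.arbitrary α)⟩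
    obtain ⟨e, he⟩ := exists_surjective_nat (Antisymmetrization α (· ≤ ·))
    set a : ℕ → α := fun n => ofAntisymmetrization _ (e n) with ha
    -- cofinal chain x
    have hx : ∃ x : ℕ → α, (∀ n, x n ≤ x (n+1)) ∧ ∀ n, a n ≤ x n := by
      refine ⟨fun n => Nat.rec (a 0) (fun k xk => (hA.directed xk (a (k+1))).choose) n, ?_, ?_⟩
      · intro n
        exact (hA.directed _ (a (n+1))).choose_spec.1
      · intro n
        induction n with
        | zero => exact le_rfl
        | succ k ih => exact (hA.directed _ (a (k+1))).choose_spec.2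
    obtain ⟨x, hxs, hax⟩ := hx
    have hxmono : Monotone x := monotone_nat_of_le_succ hxs
    have hcof : ∀ c : α, ∃ n, c ≤ x n := by
      intro c
      obtain ⟨n, hn⟩ := he (toAntisymmetrization _ c)
      refine ⟨n, le_trans ?_ (hax n)⟩
      rw [← toAntisymmetrization_le_toAntisymmetrization_iff]
      simp [ha, hn]
    -- increasing chain y in β dominating f ∘ x
    have hy : ∃ y : ℕ → β, (∀ n, y n ≤ y (n+1)) ∧ ∀ n, f (x n) ≤ y n := by
      refine ⟨fun n => Nat.rec (f (x 0)) (fun k yk => (hB.directed yk (f (x (k+1)))).choose) n,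
        ?_, ?_⟩
      · intro n
        exact (hB.directed _ (f (x (n+1)))).choose_spec.1
      · intro n
        induction n with
        | zero => exact le_rfl
        | succ k ih => exact (hB.directed _ (f (x (k+1)))).choose_spec.2
    obtain ⟨y, hys, hfy⟩ := hy
    have hymono : Monotone y := monotone_nat_of_le_succ hys
    -- the range of x is unbounded
    have hxunb : ¬ SBounded (Set.range x) := by
      rintro ⟨b, hb⟩
      refine hbd ⟨b, fun c _ => ?_⟩
      obtain ⟨n, hn⟩ := hcof c
      exact hn.trans (hb _ ⟨n, rfl⟩)
    -- hence y is unbounded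
    have hyunb : ∀ z : β, ∃ n, ¬ y n ≤ z := by
      intro z
      by_contra h
      push_neg at h
      refine hf _ hxunb ⟨z, ?_⟩
      rintro w ⟨c, ⟨n, rfl⟩, rfl⟩
      exact (hfy n).trans (h n)
    -- define F
    classical
    refine ⟨fun c => y (Nat.find (hcof c)), ?_, ?_⟩
    · intro c d hcd
      refine hymono (Nat.find_le ?_)
      exact hcd.trans (Nat.find_spec (hcof d))
    · intro S hS
      rintro ⟨z, hz⟩
      obtain ⟨n, hn⟩ := hyunb z
      -- there must be s ∈ S with n ≤ m s
      have : ∃ s ∈ S, n ≤ Nat.find (hcof s) := by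
        by_contra h
        push_neg at h
        refine hS ⟨x n, fun s hs => ?_⟩
        exact (Nat.find_spec (hcof s)).trans (hxmono (le_of_lt (h s hs)))
      obtain ⟨s, hsS, hns⟩ := this
      exact hn ((hymono hns).trans (hz _ ⟨s, hsS, rfl⟩))

private noncomputable def preAdj_of_monotone_tukey [Nonempty α]
    (F : α → β) (hmono : Monotone F) (ht : IsTukeyMap F) : PreAdjunction α β := by
  have hT : ∀ y : β, SBounded {x : α | F x ≤ y} := by
    intro y
    by_contra h
    refine ht _ h ⟨y, ?_⟩
    rintro w ⟨c, hc, rfl⟩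
    exact hc
  exact
    { F := F
      H := fun y => (hT y).choose
      Φ := fun X Y u => homOfLE ((hT Y).choose_spec X (leOfHom u))
      pa := fun A X Y u f => ⟨homOfLE (hmono (leOfHom f)), Subsingleton.elim _ _⟩ }

end Aux

/-- For essentially countable directed preorders `B`, `C`, there is a Tukey map `B → C`
iff there is a pre-adjunction between the corresponding thin categories. -/
theorem tukey_iff_preAdjunction {α β : Type} [Preorder α] [Preorder β]
    (hA : IsDirected α (· ≤ ·)) (hB : IsDirected β (· ≤ ·))
    (hcA : Countable (Antisymmetrization α (· ≤ ·)))
    (hcB : Countable (Antisymmetrization β (· ≤ ·))) :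
    (∃ f : α → β, IsTukeyMap f) ↔ Nonempty (PreAdjunction α β) := by
  constructor
  · rintro ⟨f, hf⟩
    by_cases hα : Nonempty α
    · exact ⟨preAdj_of_monotone_tukey _ (exists_monotone_tukey hA hB hcA f hf).choose_spec.1
        (exists_monotone_tukey hA hB hcA f hf).choose_spec.2⟩
    · rw [not_nonempty_iff] at hα
      have hβ : IsEmpty β := by
        by_contra hb
        rw [not_isEmpty_iff] at hb
        have h1 : ¬ SBounded (∅ : Set α) := by
          rintro ⟨b, -⟩
          exact hα.false b
        refine hf ∅ h1 ⟨Classical.arbitrary β, ?_⟩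
        rintro w ⟨c, hc, rfl⟩
        exact absurd hc (Set.notMem_empty c)
      exact ⟨{ F := f, H := fun y => (hβ.false y).elim,
               Φ := fun X => isEmptyElim X, pa := fun A => isEmptyElim A }⟩
  · rintro ⟨P⟩
    refine ⟨P.F, fun S hS => ?_⟩
    rintro ⟨b, hb⟩
    refine hS ⟨P.H b, fun s hs => ?_⟩
    exact leOfHom (P.Φ s b (homOfLE (hb _ ⟨s, hs, rfl⟩)))
end

section
/- Let C be a Ramsey category of finite objects. If C is not thin, then ω <_T C: there is a pre-adjunction from ω (the chain of natural numbers viewed as a thin category) to C, but there is no pre-adjunction from C to ω. -/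
open CategoryTheory

/-- A Ramsey category of finite objects: a locally small directed category with all
morphisms mono, having the Ramsey property, whose skeleton (given by a chosen set of
objects meeting every isomorphism class exactly once) is countable and in which every
skeletal object is the codomain of only finitely many morphisms between skeletal
objects. -/
structure RamseyCatFinObj (C : Type*) [Category C] where
  directed : ∀ A B : C, ∃ X : C, Nonempty (A ⟶ X) ∧ Nonempty (B ⟶ X)
  mono : ∀ {A B : C} (f : A ⟶ B), Mono f
  ramsey : ∀ (k : ℕ) (A B : C), Nonempty (A ⟶ B) →
    ∃ X : C, Nonempty (B ⟶ X) ∧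
      ∀ χ : (A ⟶ X) → Fin k, ∃ w : B ⟶ X, ∀ f g : A ⟶ B, χ (f ≫ w) = χ (g ≫ w)
  skel : Set C
  skel_unique : ∀ X : C, ∃! Y : C, Y ∈ skel ∧ Nonempty (X ≅ Y)
  skel_countable : Countable skel
  skel_finCod : ∀ Y ∈ skel, Finite (Σ X : skel, ((X : C) ⟶ Y))

section Aux

variable {C : Type*} [Category C]

lemma RamseyAux.homFinite (h : RamseyCatFinObj C) (A Y : C) : Finite (A ⟶ Y) := by
  obtain ⟨A', ⟨hA', ⟨iA⟩⟩, -⟩ := h.skel_unique A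
  obtain ⟨Y', ⟨hY', ⟨iY⟩⟩, -⟩ := h.skel_unique Y
  haveI := h.skel_finCod Y' hY'
  apply Finite.of_injective
    (fun u : (A ⟶ Y) => (⟨⟨A', hA'⟩, iA.inv ≫ u ≫ iY.hom⟩ : Σ X : h.skel, ((X : C) ⟶ Y')))
  intro u v huv
  injection huv with h1 h2
  rw [Iso.cancel_iso_inv_left] at h2
  exact (cancel_mono iY.hom).mp h2

lemma RamseyAux.noTop (h : RamseyCatFinObj C)
    (hnt : ∃ (A B : C) (f g : A ⟶ B), f ≠ g) (X : C) :
    ∃ D : C, Nonempty (X ⟶ D) ∧ ¬ Nonempty (D ⟶ X) := by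
  by_contra hcon
  push_neg at hcon
  obtain ⟨A, B, f, g, hfg⟩ := hnt
  haveI := RamseyAux.homFinite h A X
  obtain ⟨n, ⟨e⟩⟩ := Finite.exists_equiv_fin (A ⟶ X)
  obtain ⟨Xr, ⟨bX⟩, hr⟩ := h.ramsey n A B ⟨f⟩
  obtain ⟨D, ⟨xd⟩, ⟨rd⟩⟩ := h.directed X Xr
  obtain ⟨e1⟩ := hcon D ⟨xd⟩
  obtain ⟨w, hw⟩ := hr (fun u => e (u ≫ (rd ≫ e1)))
  have h3 : (f ≫ w) ≫ (rd ≫ e1) = (g ≫ w) ≫ (rd ≫ e1) := e.injective (hw f g)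
  rw [Category.assoc, Category.assoc] at h3
  haveI := h.mono (w ≫ rd ≫ e1)
  exact hfg ((cancel_mono (w ≫ rd ≫ e1)).mp h3)

end Aux

/-- If `C` is a Ramsey category of finite objects that is not thin, then `ω <_T C`:
there is a pre-adjunction from the thin category `ω` (the chain of natural numbers)
to `C`, but no pre-adjunction from `C` to `ω`. -/
theorem omega_lt_of_nonthin {C : Type*} [Category C] (h : RamseyCatFinObj C)
    (hnt : ∃ (A B : C) (f g : A ⟶ B), f ≠ g) :
    Nonempty (PreAdjunction ℕ C) ∧ ¬ Nonempty (PreAdjunction C ℕ) := by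
  obtain ⟨A0, B0, f0, g0, hfg0⟩ := hnt
  constructor
  · -- pre-adjunction from ℕ to C
    choose Dstep hD1 hD2 using RamseyAux.noTop h ⟨A0, B0, f0, g0, hfg0⟩
    let Dc : ℕ → C := fun n => Nat.rec A0 (fun _ X => Dstep X) n
    have chain : ∀ i j : ℕ, i ≤ j → Nonempty (Dc i ⟶ Dc j) := by
      intro i j hij
      induction j with
      | zero => obtain rfl := Nat.le_zero.mp hij; exact ⟨𝟙 _⟩
      | succ j ih =>
        rcases eq_or_lt_of_le hij with rfl | hlt
        · exact ⟨𝟙 _⟩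
        · obtain ⟨u⟩ := ih (Nat.lt_succ_iff.mp hlt)
          obtain ⟨v⟩ := hD1 (Dc j)
          exact ⟨u ≫ v⟩
    choose rep hrep using fun X : C => (h.skel_unique X).exists
    have bound : ∀ Y : C, ∃ N : ℕ, ∀ i : ℕ, Nonempty (Dc i ⟶ Y) → i ≤ N := by
      intro Y
      obtain ⟨hmem, ⟨iY⟩⟩ := hrep Y
      set S : Set ℕ := {i | Nonempty (Dc i ⟶ Y)} with hS
      have hfinT : Finite {X : h.skel // Nonempty ((X : C) ⟶ rep Y)} := by
        haveI := h.skel_finCod (rep Y) hmem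
        apply Finite.of_injective
          (fun x => (⟨x.1, x.2.some⟩ : Σ X : h.skel, ((X : C) ⟶ rep Y)))
        intro a b hab
        exact Subtype.ext (congrArg Sigma.fst hab)
      have hfin : S.Finite := by
        rw [← Set.finite_coe_iff]
        apply Finite.of_injective (fun i : S =>
          (⟨⟨rep (Dc i.1), (hrep (Dc i.1)).1⟩,
            ⟨((hrep (Dc i.1)).2.some).inv ≫ i.2.some ≫ iY.hom⟩⟩ :
              {X : h.skel // Nonempty ((X : C) ⟶ rep Y)}))
        intro a b hab
        have heq : rep (Dc a.1) = rep (Dc b.1) := by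
          have := congrArg (fun x => (x.1 : C)) hab
          simpa using this
        have key : ∀ i j : S, i.1 < j.1 → rep (Dc i.1) = rep (Dc j.1) → False := by
          intro i j hij hrepeq
          obtain ⟨u⟩ := chain (i.1 + 1) j.1 hij
          have iA : Dc i.1 ≅ rep (Dc j.1) := hrepeq ▸ (hrep (Dc i.1)).2.some
          have iB : Dc j.1 ≅ rep (Dc j.1) := (hrep (Dc j.1)).2.some
          exact hD2 (Dc i.1) ⟨u ≫ iB.hom ≫ iA.inv⟩
        rcases lt_trichotomy a.1 b.1 with hlt | heq' | hgt
        · exact absurd heq (fun he => key a b hlt he)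
        · exact Subtype.ext heq'
        · exact absurd heq.symm (fun he => key b a hgt he)
      obtain ⟨N, hN⟩ := hfin.bddAbove
      exact ⟨N, fun i hi => hN hi⟩
    choose Hf hHf using bound
    exact ⟨{
      F := Dc
      H := Hf
      Φ := fun X Y u => homOfLE (hHf Y X ⟨u⟩)
      pa := by
        intro A X Y u f
        obtain ⟨v⟩ := chain A X (leOfHom f)
        exact ⟨v, Subsingleton.elim _ _⟩ }⟩
  · rintro ⟨P⟩
    obtain ⟨vf, hvf⟩ := P.pa A0 B0 (P.F B0) (𝟙 _) f0
    obtain ⟨vg, hvg⟩ := P.pa A0 B0 (P.F B0) (𝟙 _) g0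
    have hv : vf = vg := Subsingleton.elim _ _
    haveI := h.mono (P.Φ B0 (P.F B0) (𝟙 _))
    apply hfg0
    have heq : f0 ≫ P.Φ B0 (P.F B0) (𝟙 _) = g0 ≫ P.Φ B0 (P.F B0) (𝟙 _) := by
      rw [hvf, hvg, hv]
    exact (cancel_mono _).mp heq
end
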